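/- Let A be a Novikov algebra over a field k of characteristic zero. Then every term A^{(i)} of the derived series of A is a two-sided ideal of A. -/

import Mathlib

/-!
By induction on `i` it suffices that the commutator span `[I, I]` of a two-sided ideal `I` is
again a two-sided ideal. For `x, y ∈ I` the left-symmetric and Novikov identities give
`2 [x, y] b = [x, y b] - [y, x b]` and `a [x, y] = [x, a y] - [y, a x] - [x, y] a`,
and both right-hand sides lie in `[I, I]` (the last term by the first identity); halving is
where the characteristic enters.
-/

variable {k A : Type*} [Field k] [CharZero k] [AddCommGroup A] [Module k A]

/-- The derived series of an algebra `(A, mul)`: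
`derSeries mul 0 = A^{(0)} = A` and `derSeries mul (i+1) = A^{(i+1)} = [A^{(i)}, A^{(i)}]`,
the subspace spanned by all commutators `x·y − y·x` with `x, y ∈ A^{(i)}`. -/
def derSeries (mul : A →ₗ[k] A →ₗ[k] A) : ℕ → Submodule k A
  | 0 => ⊤
  | i + 1 =>
    Submodule.span k
      {z : A | ∃ x ∈ derSeries mul i, ∃ y ∈ derSeries mul i, z = mul x y - mul y x}

section

variable {R : Type*} [CommRing R] [Module R A]

def IsTwoSidedIdeal (mul : A →ₗ[R] A →ₗ[R] A) (I : Submodule R A) : Prop :=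
  ∀ a, ∀ x ∈ I, mul a x ∈ I ∧ mul x a ∈ I

def commutatorSpan (mul : A →ₗ[R] A →ₗ[R] A) (I : Submodule R A) : Submodule R A :=
  Submodule.span R {z : A | ∃ x ∈ I, ∃ y ∈ I, z = mul x y - mul y x}

theorem commutator_mem_commutatorSpan {mul : A →ₗ[R] A →ₗ[R] A} {I : Submodule R A}
    {x y : A} (hx : x ∈ I) (hy : y ∈ I) : mul x y - mul y x ∈ commutatorSpan mul I :=
  Submodule.subset_span ⟨x, hx, y, hy, rfl⟩

theorem two_smul_commutator_mul (mul : A →ₗ[R] A →ₗ[R] A)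
    (hls : ∀ x y z : A,
      mul x (mul y z) - mul (mul x y) z = mul y (mul x z) - mul (mul y x) z)
    (hnov : ∀ x y z : A, mul (mul x y) z = mul (mul x z) y) (x y b : A) :
    (2 : R) • mul (mul x y - mul y x) b =
      (mul x (mul y b) - mul (mul y b) x) - (mul y (mul x b) - mul (mul x b) y) := by
  simp only [map_sub, LinearMap.sub_apply, two_smul]
  rw [eq_add_of_sub_eq (hls x y b), hnov y b x, hnov x b y]
  abel

theorem mul_commutator (mul : A →ₗ[R] A →ₗ[R] A)
    (hls : ∀ x y z : A,
      mul x (mul y z) - mul (mul x y) z = mul y (mul x z) - mul (mul y x) z)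
    (hnov : ∀ x y z : A, mul (mul x y) z = mul (mul x z) y) (a x y : A) :
    mul a (mul x y - mul y x) =
      (mul x (mul a y) - mul (mul a y) x) - (mul y (mul a x) - mul (mul a x) y)
        - mul (mul x y - mul y x) a := by
  simp only [map_sub, LinearMap.sub_apply]
  rw [eq_add_of_sub_eq (hls a x y), eq_add_of_sub_eq (hls a y x), hnov x a y, hnov y a x]
  abel

theorem isTwoSidedIdeal_commutatorSpan {mul : A →ₗ[R] A →ₗ[R] A} {I : Submodule R A}
    (hls : ∀ x y z : A,
      mul x (mul y z) - mul (mul x y) z = mul y (mul x z) - mul (mul y x) z)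
    (hnov : ∀ x y z : A, mul (mul x y) z = mul (mul x z) y) (h2 : IsUnit (2 : R))
    (hI : IsTwoSidedIdeal mul I) : IsTwoSidedIdeal mul (commutatorSpan mul I) := by
  have commutator_mul_mem :
      ∀ b, ∀ x ∈ I, ∀ y ∈ I, mul (mul x y - mul y x) b ∈ commutatorSpan mul I := by
    intro b x hx y hy
    rw [← Submodule.smul_mem_iff_of_isUnit _ h2, two_smul_commutator_mul mul hls hnov]
    exact sub_mem (commutator_mem_commutatorSpan hx (hI b y hy).2)
      (commutator_mem_commutatorSpan hy (hI b x hx).2)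
  intro a z hz
  constructor
  · refine (Submodule.span_le (p := (commutatorSpan mul I).comap (mul a))).mpr ?_ hz
    rintro _ ⟨x, hx, y, hy, rfl⟩
    rw [SetLike.mem_coe, Submodule.mem_comap, mul_commutator mul hls hnov]
    exact sub_mem (sub_mem (commutator_mem_commutatorSpan hx (hI a y hy).1)
      (commutator_mem_commutatorSpan hy (hI a x hx).1)) (commutator_mul_mem a x hx y hy)
  · refine (Submodule.span_le (p := (commutatorSpan mul I).comap (mul.flip a))).mpr ?_ hz
    rintro _ ⟨x, hx, y, hy, rfl⟩
    exact commutator_mul_mem a x hx y hy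

end

/-- In a Novikov algebra `A` over a field `k` of characteristic zero,
every term `A^{(i)}` of the derived series is a two-sided ideal of `A`. -/
theorem novikov_derivedSeries_ideal
    (mul : A →ₗ[k] A →ₗ[k] A)
    (hls : ∀ x y z : A,
      mul x (mul y z) - mul (mul x y) z = mul y (mul x z) - mul (mul y x) z)
    (hnov : ∀ x y z : A, mul (mul x y) z = mul (mul x z) y) :
    ∀ i : ℕ, ∀ a : A, ∀ x ∈ derSeries mul i,
      mul a x ∈ derSeries mul i ∧ mul x a ∈ derSeries mul i := by
  intro i
  induction i with
  | zero => exact fun _ _ _ ↦ ⟨trivial, trivial⟩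
  | succ i ih =>
    exact isTwoSidedIdeal_commutatorSpan hls hnov (isUnit_iff_ne_zero.mpr two_ne_zero) ih
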